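/- arXiv:1106.1304 — 4 statements merged into one kernel-verified Lean document; each statement's English description precedes it below -/
import Mathlib

section
/- For any two coprime positive integers a and b, the double sum S(a,b) = Σ_{j=0}^{a-1} Σ_{k=0}^{b-1} |k/b - j/a| equals (2a²b² - 3ab + a² + b² - 1)/(6ab). -/
/-!
Clearing denominators, `S(a,b) = (1/ab) ∑_j ∑_k |ka - jb|`. For fixed `j` write `jb = qa + s`
with `0 ≤ s < a`: the summands change sign after `k = q`, which gives a closed form in `j` and
`s`. Since `gcd(a,b) = 1`, the residue `s = jb mod a` runs once through `0, …, a - 1` as `j`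
does, so the whole sum reduces to the power sums `∑ t` and `∑ t²`.
-/

open Finset

theorem sum_range_abs_eq_of_sign_change {α : Type*} [AddCommGroup α] [LinearOrder α]
    [IsOrderedAddMonoid α] {f : ℕ → α} {m n : ℕ} (hmn : m ≤ n)
    (hneg : ∀ k ∈ range m, f k ≤ 0) (hpos : ∀ k ∈ Ico m n, 0 ≤ f k) :
    ∑ k ∈ range n, |f k| = ∑ k ∈ range n, f k - 2 • ∑ k ∈ range m, f k := by
  rw [← sum_range_add_sum_Ico _ hmn, ← sum_range_add_sum_Ico _ hmn,
    sum_congr rfl fun k hk => abs_of_nonpos (hneg k hk),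
    sum_congr rfl fun k hk => abs_of_nonneg (hpos k hk), sum_neg_distrib, two_nsmul]
  abel

section PowerSums

variable {K : Type*} [Field K] [CharZero K]

theorem sum_range_natCast (n : ℕ) : ∑ i ∈ range n, (i : K) = n * (n - 1) / 2 := by
  induction n with
  | zero => simp
  | succ n ih => rw [sum_range_succ, ih]; push_cast; ring

theorem sum_range_natCast_sq (n : ℕ) :
    ∑ i ∈ range n, (i : K) ^ 2 = n * (n - 1) * (2 * n - 1) / 6 := by
  induction n with
  | zero => simp
  | succ n ih => rw [sum_range_succ, ih]; push_cast; ring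

end PowerSums

theorem sum_range_abs_natCast_mul_sub {a b c : ℕ} (hc : c < a * b) :
    ∑ k ∈ range b, |(k : ℝ) * a - c| =
      a * b * (b - 1) / 2 - b * c + ((c : ℝ) ^ 2 - (c % a : ℕ) ^ 2) / a + c +
        (c % a : ℕ) := by
  have ha : 0 < a := Nat.pos_of_ne_zero (by rintro rfl; simp at hc)
  have hq : c / a < b := (Nat.div_lt_iff_lt_mul ha).2 (by rwa [mul_comm])
  have hdiv : (c : ℝ) = a * (c / a : ℕ) + (c % a : ℕ) := by
    exact_mod_cast (Nat.div_add_mod c a).symm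
  rw [sum_range_abs_eq_of_sign_change (m := c / a + 1) hq]
  · simp only [sum_sub_distrib, ← sum_mul, sum_const, card_range, nsmul_eq_mul,
      sum_range_natCast]
    rw [hdiv]
    have : (a : ℝ) ≠ 0 := by positivity
    field_simp
    push_cast
    ring
  · intro k hk
    have : k * a ≤ c := (Nat.mul_le_mul_right a (Nat.lt_succ_iff.1 (mem_range.1 hk))).trans
      (Nat.div_mul_le_self c a)
    rw [sub_nonpos]; exact_mod_cast this
  · intro k hk
    have : c ≤ k * a := ((Nat.lt_mul_div_succ c ha).trans_le (by
      rw [mul_comm]; exact Nat.mul_le_mul_right a (mem_Ico.1 hk).1)).le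
    rw [sub_nonneg]; exact_mod_cast this

theorem Nat.Coprime.sum_range_comp_mul_mod {M : Type*} [AddCommMonoid M] {a b : ℕ}
    (hab : Nat.Coprime a b) (g : ℕ → M) :
    ∑ j ∈ range a, g (j * b % a) = ∑ t ∈ range a, g t := by
  have hmaps : Set.MapsTo (fun j => j * b % a) (range a : Set ℕ) (range a) := fun j hj =>
    mem_range.2 (Nat.mod_lt _ (Nat.zero_lt_of_lt (mem_range.1 hj)))
  have hinj : Set.InjOn (fun j => j * b % a) (range a : Set ℕ) := fun i hi j hj hij => by
    have := Nat.ModEq.cancel_right_of_coprime hab hij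
    exact Nat.ModEq.eq_of_lt_of_lt this (mem_range.1 hi) (mem_range.1 hj)
  exact sum_nbij (fun j => j * b % a) hmaps hinj
    (((range a).finite_toSet.injOn_iff_bijOn_of_mapsTo hmaps).1 hinj).surjOn fun _ _ => rfl

theorem S_ab (a b : ℕ) (ha : 0 < a) (hb : 0 < b) (hab : Nat.gcd a b = 1) :
    ∑ j ∈ Finset.range a, ∑ k ∈ Finset.range b,
      |(k : ℝ) / b - (j : ℝ) / a| =
    (2 * (a : ℝ)^2 * (b : ℝ)^2 - 3 * a * b + (a : ℝ)^2 + (b : ℝ)^2 - 1) / (6 * a * b) := by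
  have ha' : (0 : ℝ) < a := by exact_mod_cast ha
  have hb' : (0 : ℝ) < b := by exact_mod_cast hb
  calc ∑ j ∈ range a, ∑ k ∈ range b, |(k : ℝ) / b - j / a|
      = ∑ j ∈ range a, (∑ k ∈ range b, |(k : ℝ) * a - (j * b : ℕ)|) / (a * b) := by
        refine sum_congr rfl fun j _ => ?_
        rw [sum_div]
        refine sum_congr rfl fun k _ => ?_
        rw [div_sub_div _ _ hb'.ne' ha'.ne', abs_div, abs_of_pos (mul_pos hb' ha')]
        push_cast; ring_nf
    _ = ∑ j ∈ range a, (a * b * (b - 1) / 2 - b * (j * b : ℕ) +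
          (((j * b : ℕ) : ℝ) ^ 2 - (j * b % a : ℕ) ^ 2) / a + (j * b : ℕ) +
            (j * b % a : ℕ)) / (a * b) := by
        refine sum_congr rfl fun j hj => ?_
        rw [sum_range_abs_natCast_mul_sub (Nat.mul_lt_mul_of_pos_right (mem_range.1 hj) hb)]
    _ = _ := by
        simp only [← sum_div, sum_add_distrib, sum_sub_distrib, sum_const, card_range,
          nsmul_eq_mul]
        rw [Nat.Coprime.sum_range_comp_mul_mod hab (fun t => (t : ℝ)),
          Nat.Coprime.sum_range_comp_mul_mod hab (fun t => (t : ℝ) ^ 2)]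
        push_cast
        simp only [← sum_mul, ← mul_sum, mul_pow, sum_range_natCast, sum_range_natCast_sq]
        field_simp
        ring
end

section
/- The multiple Mahler measure m(x^a−1, x^b−1) := ∫_0^1 log|e^{2πiθa}−1| · log|e^{2πiθb}−1| dθ equals (π²/12)·gcd(a,b)²/(ab) for all positive integers a and b. -/
/-!
For `|r| < 1` the function `x ↦ log ‖1 - r e^{ix}‖` has the Fourier expansion `-∑ r^k cos(kx)/k`.
Multiplying the expansions at `x = 2πaθ` and `x = 2πbθ` and integrating term by term over `[0, 1]`,
orthogonality of the cosines keeps only the pairs `(m, n)` with `am = bn`; writing `a = a'g`,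
`b = b'g` with `a', b'` coprime, these are the pairs `(b'k, a'k)`, so the integral equals
`∑ r^((a'+b')k) / (2a'b'k²)`. As `r → 1⁻` this tends to `ζ(2) / (2a'b') = π²g² / (12ab)`, while the
integrals converge to the Mahler measure by dominated convergence: `|log ‖1 - r e^{ix}‖|` is at most
`log 2 + |log |sin x||`, and `log |sin x|` is square integrable.
-/

open Real MeasureTheory Filter Topology

noncomputable def logNormOneSub (r x : ℝ) : ℝ := Real.log ‖1 - r * Complex.exp (x * Complex.I)‖

theorem norm_one_sub_mul_exp_sq (r x : ℝ) :
    ‖1 - r * Complex.exp (x * Complex.I)‖ ^ 2 = (r - cos x) ^ 2 + sin x ^ 2 := by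
  rw [Complex.sq_norm, Complex.normSq_apply, Complex.exp_mul_I]
  simp only [← Complex.ofReal_cos, ← Complex.ofReal_sin, Complex.sub_re, Complex.sub_im,
    Complex.mul_re, Complex.mul_im, Complex.add_re, Complex.add_im, Complex.ofReal_re,
    Complex.ofReal_im, Complex.I_re, Complex.I_im, Complex.one_re, Complex.one_im]
  linear_combination (r ^ 2 - 1) * sin_sq_add_cos_sq x

theorem abs_sin_le_norm_one_sub_mul_exp (r x : ℝ) :
    |sin x| ≤ ‖1 - r * Complex.exp (x * Complex.I)‖ :=
  abs_le_of_sq_le_sq (by nlinarith [norm_one_sub_mul_exp_sq r x]) (norm_nonneg _)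

theorem norm_one_sub_mul_exp_le {r : ℝ} (hr : |r| ≤ 1) (x : ℝ) :
    ‖1 - r * Complex.exp (x * Complex.I)‖ ≤ 2 := by
  calc ‖1 - r * Complex.exp (x * Complex.I)‖ ≤ ‖(1 : ℂ)‖ + ‖r * Complex.exp (x * Complex.I)‖ :=
        norm_sub_le _ _
    _ ≤ 2 := by
        rw [norm_one, norm_mul, Complex.norm_exp_ofReal_mul_I, Complex.norm_real, norm_eq_abs]
        linarith

theorem abs_logNormOneSub_le {r x : ℝ} (hr : |r| ≤ 1) (hx : sin x ≠ 0) :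
    |logNormOneSub r x| ≤ log 2 + |log (sin x)| := by
  have h_sin : 0 < |sin x| := abs_pos.2 hx
  have h_lower : log (sin x) ≤ logNormOneSub r x := by
    rw [← log_abs]
    exact log_le_log h_sin (abs_sin_le_norm_one_sub_mul_exp r x)
  have h_upper : logNormOneSub r x ≤ log 2 :=
    log_le_log (h_sin.trans_le (abs_sin_le_norm_one_sub_mul_exp r x)) (norm_one_sub_mul_exp_le hr x)
  have h_log_sin : log (sin x) ≤ 0 := by
    rw [← log_abs]
    exact log_nonpos (abs_nonneg _) (abs_sin_le_one x)
  rw [abs_le, abs_of_nonpos h_log_sin]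
  constructor <;> linarith [log_nonneg (one_le_two : (1 : ℝ) ≤ 2)]

theorem continuousAt_logNormOneSub {r x : ℝ} (hx : sin x ≠ 0) :
    ContinuousAt (fun s => logNormOneSub s x) r :=
  ContinuousAt.log (by fun_prop)
    ((abs_pos.2 hx).trans_le (abs_sin_le_norm_one_sub_mul_exp r x)).ne'

theorem hasSum_logNormOneSub {r : ℝ} (hr : |r| < 1) (x : ℝ) :
    HasSum (fun k : ℕ => -(r ^ k * cos (k * x) / k)) (logNormOneSub r x) := by
  set z : ℂ := r * Complex.exp (x * Complex.I)
  have hz : ‖z‖ < 1 := by simpa [z, Complex.norm_exp_ofReal_mul_I] using hr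
  have h_re (k : ℕ) : (z ^ k / k).re = r ^ k * cos (k * x) / k := by
    rw [mul_pow, ← Complex.exp_nat_mul, ← mul_assoc, ← Complex.ofReal_natCast,
      ← Complex.ofReal_mul, ← Complex.ofReal_pow, Complex.div_ofReal_re, Complex.re_ofReal_mul,
      Complex.exp_ofReal_mul_I_re]
  simpa [h_re, logNormOneSub, z, Complex.log_re] using
    (Complex.hasSum_re (Complex.hasSum_taylorSeries_neg_log hz)).neg

theorem sq_log_le_rpow {x : ℝ} (hx0 : 0 < x) (hx1 : x ≤ 1) :
    log x ^ 2 ≤ 16 * x ^ (-(1 / 2) : ℝ) := by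
  have h := abs_log_mul_self_rpow_lt x (1 / 4) hx0 hx1 (by norm_num)
  have h_sq : (x ^ (1 / 4 : ℝ)) ^ 2 * x ^ (-(1 / 2) : ℝ) = 1 := by
    rw [← rpow_natCast, ← rpow_mul hx0.le, ← rpow_add hx0]
    norm_num
  calc log x ^ 2 = |log x * x ^ (1 / 4 : ℝ)| ^ 2 * x ^ (-(1 / 2) : ℝ) := by
        rw [sq_abs, mul_pow, mul_assoc, h_sq, mul_one]
    _ ≤ 16 * x ^ (-(1 / 2) : ℝ) := by
        gcongr
        nlinarith [abs_nonneg (log x * x ^ (1 / 4 : ℝ))]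

theorem intervalIntegrable_sq_log_sin (a b : ℝ) :
    IntervalIntegrable (fun x => log (sin x) ^ 2) volume a b := by
  set f : ℝ → ℝ := fun x => log (sin x) ^ 2
  have h_half : IntervalIntegrable f volume 0 (π / 2) := by
    have h_bound : IntervalIntegrable (fun x => 16 * (2 / π * x) ^ (-(1 / 2) : ℝ)) volume
        0 (π / 2) := by
      have h := (intervalIntegral.intervalIntegrable_rpow' (a := 0) (b := 1) (r := -(1 / 2))
        (by norm_num)).comp_mul_left (c := 2 / π)
      rw [zero_div, one_div_div] at h
      exact h.const_mul 16
    refine h_bound.mono_fun' (by fun_prop : Measurable f).aestronglyMeasurable ?_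
    rw [Set.uIoc_of_le (by positivity), EventuallyLE, ae_restrict_iff' measurableSet_Ioc]
    refine .of_forall fun x ⟨hx0, hx1⟩ => ?_
    have hy0 : 0 < 2 / π * x := by positivity
    have hy_sin : 2 / π * x ≤ sin x := mul_le_sin hx0.le hx1
    have h_log : log (2 / π * x) ≤ log (sin x) := log_le_log hy0 hy_sin
    have h_log_sin : log (sin x) ≤ 0 := log_nonpos (hy0.le.trans hy_sin) (sin_le_one x)
    rw [norm_eq_abs, abs_of_nonneg (sq_nonneg _)]
    calc log (sin x) ^ 2 ≤ log (2 / π * x) ^ 2 := by nlinarith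
      _ ≤ _ := sq_log_le_rpow hy0 (hy_sin.trans (sin_le_one x))
  have h_period : IntervalIntegrable f volume 0 (0 + π) := by
    have h_refl := h_half.comp_sub_left π
    simp only [f, sin_pi_sub, sub_zero, show π - π / 2 = π / 2 by ring] at h_refl
    rw [zero_add]
    exact h_half.trans h_refl.symm
  exact Function.Periodic.intervalIntegrable (fun x => by simp [f, sin_add_pi]) pi_ne_zero
    h_period a b

theorem intervalIntegrable_sq_log_sin_mul {c : ℝ} (hc : c ≠ 0) (u v : ℝ) :
    IntervalIntegrable (fun θ => log (sin (c * θ)) ^ 2) volume u v := by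
  simpa [mul_div_cancel_left₀ _ hc] using
    (intervalIntegrable_sq_log_sin (c * u) (c * v)).comp_mul_left (c := c)

theorem ae_sin_mul_ne_zero {c : ℝ} (hc : c ≠ 0) : ∀ᵐ θ : ℝ, sin (c * θ) ≠ 0 := by
  rw [ae_iff]
  refine Set.Countable.measure_zero ((Set.countable_range fun n : ℤ => n * π / c).mono ?_) _
  intro θ hθ
  obtain ⟨n, hn⟩ := sin_eq_zero_iff.1 (not_not.1 hθ)
  exact ⟨n, show n * π / c = θ by rw [hn, mul_div_cancel_left₀ θ hc]⟩

theorem tendsto_integral_logNormOneSub_mul {a b : ℝ} (ha : a ≠ 0) (hb : b ≠ 0) (u v : ℝ) :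
    Tendsto (fun r => ∫ θ in u..v, logNormOneSub r (a * θ) * logNormOneSub r (b * θ)) (𝓝[<] 1)
      (𝓝 (∫ θ in u..v, logNormOneSub 1 (a * θ) * logNormOneSub 1 (b * θ))) := by
  refine intervalIntegral.tendsto_integral_filter_of_dominated_convergence
    (fun θ => 2 * log 2 ^ 2 + log (sin (a * θ)) ^ 2 + log (sin (b * θ)) ^ 2)
    (.of_forall fun r => by unfold logNormOneSub; fun_prop) ?_
    ((intervalIntegrable_const.add (intervalIntegrable_sq_log_sin_mul ha u v)).add
      (intervalIntegrable_sq_log_sin_mul hb u v)) ?_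
  · filter_upwards [Ioo_mem_nhdsLT (show (-1 : ℝ) < 1 by norm_num)] with r hr
    filter_upwards [ae_sin_mul_ne_zero ha, ae_sin_mul_ne_zero hb] with θ hθa hθb _
    have h_unit : |r| ≤ 1 := abs_le.2 ⟨hr.1.le, hr.2.le⟩
    have h_a := abs_logNormOneSub_le h_unit hθa
    have h_b := abs_logNormOneSub_le h_unit hθb
    set x := |log (sin (a * θ))|
    set y := |log (sin (b * θ))|
    rw [norm_mul, norm_eq_abs, norm_eq_abs, ← sq_abs (log (sin (a * θ))),
      ← sq_abs (log (sin (b * θ)))]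
    calc |logNormOneSub r (a * θ)| * |logNormOneSub r (b * θ)| ≤ (log 2 + x) * (log 2 + y) :=
          mul_le_mul h_a h_b (abs_nonneg _) (by positivity)
      _ ≤ 2 * log 2 ^ 2 + x ^ 2 + y ^ 2 := by
          nlinarith [sq_nonneg (log 2 - x), sq_nonneg (log 2 - y), sq_nonneg (x - y)]
  · filter_upwards [ae_sin_mul_ne_zero ha, ae_sin_mul_ne_zero hb] with θ hθa hθb _
    exact ((continuousAt_logNormOneSub hθa).tendsto.mul
      (continuousAt_logNormOneSub hθb).tendsto).mono_left nhdsWithin_le_nhds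

theorem integral_cos_two_pi_int_mul (K : ℤ) :
    ∫ θ in (0 : ℝ)..1, cos (2 * π * K * θ) = if K = 0 then 1 else 0 := by
  split_ifs with hK
  · simp [hK]
  have hc : 2 * π * K ≠ 0 := by positivity
  rw [intervalIntegral.integral_comp_mul_left (fun x => cos x) hc, mul_zero, mul_one,
    integral_cos, show 2 * π * K = (2 * K : ℤ) * π by push_cast; ring, sin_int_mul_pi]
  simp

theorem integral_cos_mul_cos {M : ℕ} (hM : 0 < M) (N : ℕ) :
    ∫ θ in (0 : ℝ)..1, cos (2 * π * M * θ) * cos (2 * π * N * θ) =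
      if M = N then 1 / 2 else 0 := by
  have h_prod (θ : ℝ) : cos (2 * π * M * θ) * cos (2 * π * N * θ) =
      (cos (2 * π * ((M - N : ℤ) : ℝ) * θ) + cos (2 * π * ((M + N : ℤ) : ℝ) * θ)) / 2 := by
    push_cast
    rw [show 2 * π * (M - N) * θ = 2 * π * M * θ - 2 * π * N * θ by ring,
      show 2 * π * (M + N) * θ = 2 * π * M * θ + 2 * π * N * θ by ring, cos_sub, cos_add]
    ring
  simp_rw [h_prod]
  rw [intervalIntegral.integral_div,
    intervalIntegral.integral_add (Continuous.intervalIntegrable (by fun_prop) _ _)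
      (Continuous.intervalIntegrable (by fun_prop) _ _),
    integral_cos_two_pi_int_mul, integral_cos_two_pi_int_mul,
    if_neg (show (M + N : ℤ) ≠ 0 by omega)]
  simp only [sub_eq_zero, Nat.cast_inj]
  split_ifs <;> norm_num

theorem abs_pow_mul_cos_div_le (r y : ℝ) (k : ℕ) : |r ^ k * cos y / k| ≤ |r| ^ k := by
  rcases Nat.eq_zero_or_pos k with rfl | hk
  · simp
  rw [abs_div, abs_mul, abs_pow, Nat.abs_cast, div_le_iff₀ (by positivity)]
  have : (1 : ℝ) ≤ k := by exact_mod_cast hk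
  nlinarith [abs_cos_le_one y, pow_nonneg (abs_nonneg r) k, abs_nonneg (cos y)]

-- Pairs with `m = 0` or `n = 0` get `0` through `x / 0 = 0`, just as the `k = 0` term of
-- `hasSum_logNormOneSub` does.
noncomputable def pairCoeff (a b : ℕ) (r : ℝ) (p : ℕ × ℕ) : ℝ :=
  if a * p.1 = b * p.2 then r ^ (p.1 + p.2) / (2 * p.1 * p.2) else 0

theorem integral_cos_series_term_mul {a : ℕ} (ha : 0 < a) (b : ℕ) (r : ℝ) (m n : ℕ) :
    ∫ θ in (0 : ℝ)..1, -(r ^ m * cos (m * (2 * π * a * θ)) / m) *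
      -(r ^ n * cos (n * (2 * π * b * θ)) / n) = pairCoeff a b r (m, n) := by
  have h_term (θ : ℝ) : -(r ^ m * cos (m * (2 * π * a * θ)) / m) *
      -(r ^ n * cos (n * (2 * π * b * θ)) / n) = r ^ (m + n) / (m * n) *
        (cos (2 * π * (a * m : ℕ) * θ) * cos (2 * π * (b * n : ℕ) * θ)) := by
    push_cast
    ring_nf
  simp_rw [h_term]
  rcases Nat.eq_zero_or_pos m with rfl | hm
  · simp [pairCoeff]
  rw [intervalIntegral.integral_const_mul, integral_cos_mul_cos (by positivity), pairCoeff]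
  split_ifs <;> ring

theorem hasSum_integral_logNormOneSub_mul {a : ℕ} (ha : 0 < a) (b : ℕ) {r : ℝ} (hr : |r| < 1) :
    HasSum (pairCoeff a b r)
      (∫ θ in (0 : ℝ)..1, logNormOneSub r (2 * π * a * θ) * logNormOneSub r (2 * π * b * θ)) := by
  set t : ℕ → ℕ → ℝ → ℝ := fun c k θ => -(r ^ k * cos (k * (2 * π * c * θ)) / k)
  have h_bound (p : ℕ × ℕ) (θ : ℝ) : ‖t a p.1 θ * t b p.2 θ‖ ≤ |r| ^ p.1 * |r| ^ p.2 := by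
    rw [norm_mul, norm_eq_abs, norm_eq_abs, abs_neg, abs_neg]
    exact mul_le_mul (abs_pow_mul_cos_div_le _ _ _) (abs_pow_mul_cos_div_le _ _ _)
      (abs_nonneg _) (by positivity)
  have h_geom := summable_geometric_of_lt_one (abs_nonneg r) hr
  have h_summable : Summable fun p : ℕ × ℕ => |r| ^ p.1 * |r| ^ p.2 :=
    h_geom.mul_of_nonneg h_geom (fun _ => by positivity) (fun _ => by positivity)
  have h_product (θ : ℝ) : HasSum (fun p : ℕ × ℕ => t a p.1 θ * t b p.2 θ)
      (logNormOneSub r (2 * π * a * θ) * logNormOneSub r (2 * π * b * θ)) :=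
    (hasSum_logNormOneSub hr _).mul (hasSum_logNormOneSub hr _)
      (.of_norm_bounded h_summable (h_bound · θ))
  have h_swap := intervalIntegral.hasSum_integral_of_dominated_convergence (a := 0) (b := 1)
    (μ := volume) (F := fun (p : ℕ × ℕ) θ => t a p.1 θ * t b p.2 θ)
    (fun p _ => |r| ^ p.1 * |r| ^ p.2) (fun p => by fun_prop)
    (fun p => .of_forall fun θ _ => h_bound p θ) (.of_forall fun _ _ => h_summable)
    intervalIntegrable_const (.of_forall fun θ _ => h_product θ)
  rwa [show (fun p : ℕ × ℕ => ∫ θ in (0 : ℝ)..1, t a p.1 θ * t b p.2 θ) = pairCoeff a b r from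
    funext fun p => integral_cos_series_term_mul ha b r p.1 p.2] at h_swap

theorem pairCoeff_mul_right {g : ℕ} (hg : 0 < g) (a b : ℕ) :
    pairCoeff (a * g) (b * g) = pairCoeff a b := by
  funext r p
  simp only [pairCoeff, mul_right_comm _ g, Nat.mul_right_cancel_iff hg]

theorem hasSum_pairCoeff_iff {a b : ℕ} (hab : a.Coprime b) (hb : 0 < b) (r S : ℝ) :
    HasSum (pairCoeff a b r) S ↔
      HasSum (fun k : ℕ => r ^ ((a + b) * k) / (2 * a * b * k ^ 2)) S := by
  have h_inj : Function.Injective fun k : ℕ => (b * k, a * k) :=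
    fun k l h => Nat.eq_of_mul_eq_mul_left hb (Prod.ext_iff.1 h).1
  rw [← h_inj.hasSum_iff]
  · congr! 1
    funext k
    rw [Function.comp_apply, pairCoeff, if_pos (mul_left_comm a b k)]
    push_cast
    ring
  · rintro ⟨m, n⟩ h_range
    simp only [pairCoeff, ite_eq_right_iff]
    intro h_eq
    obtain ⟨k, rfl⟩ : b ∣ m := hab.symm.dvd_of_dvd_mul_left ⟨n, h_eq⟩
    obtain rfl : n = a * k := Nat.eq_of_mul_eq_mul_left hb (by rw [← h_eq]; ring)
    exact absurd ⟨k, rfl⟩ h_range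

theorem tendsto_tsum_pow_div_mul_sq (c : ℕ) (d : ℝ) :
    Tendsto (fun r : ℝ => ∑' k : ℕ, r ^ (c * k) / (d * k ^ 2)) (𝓝[<] 1)
      (𝓝 (π ^ 2 / (6 * d))) := by
  have h_zeta : HasSum (fun k : ℕ => 1 / (d * k ^ 2)) (π ^ 2 / (6 * d)) := by
    rw [show π ^ 2 / (6 * d) = π ^ 2 / 6 / d by ring,
      show (fun k : ℕ => 1 / (d * k ^ 2)) = fun k : ℕ => 1 / (k : ℝ) ^ 2 / d by funext k; ring]
    exact hasSum_zeta_two.div_const d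
  rw [← h_zeta.tsum_eq]
  refine tendsto_tsum_of_dominated_convergence h_zeta.summable.abs (fun k => ?_) ?_
  · have h_pow : Tendsto (fun r : ℝ => r ^ (c * k)) (𝓝[<] 1) (𝓝 1) := by
      simpa using ((continuous_pow (M := ℝ) (c * k)).tendsto 1).mono_left nhdsWithin_le_nhds
    exact h_pow.div_const _
  · filter_upwards [Ioo_mem_nhdsLT (show (-1 : ℝ) < 1 by norm_num)] with r hr k
    rw [norm_eq_abs, abs_div, abs_div, abs_one, abs_pow]
    gcongr
    exact pow_le_one₀ (abs_nonneg r) (abs_le.2 ⟨hr.1.le, hr.2.le⟩)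

theorem log_norm_exp_sub_one_eq_logNormOneSub (c : ℕ) (θ : ℝ) :
    Real.log ‖Complex.exp (2 * π * Complex.I * θ * c) - 1‖ = logNormOneSub 1 (2 * π * c * θ) := by
  rw [logNormOneSub, norm_sub_rev, Complex.ofReal_one, one_mul]
  push_cast
  ring_nf

open Real in
theorem mahler_xa_xb (a b : ℕ) (ha : 0 < a) (hb : 0 < b) :
    ∫ θ in (0:ℝ)..1,
        Real.log ‖Complex.exp (2 * π * Complex.I * θ * a) - 1‖ *
        Real.log ‖Complex.exp (2 * π * Complex.I * θ * b) - 1‖ =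
    (π^2 / 12) * (Nat.gcd a b : ℝ)^2 / (a * b) := by
  simp_rw [log_norm_exp_sub_one_eq_logNormOneSub]
  obtain ⟨g, a', b', hg, hab', rfl, rfl⟩ := Nat.exists_coprime' (Nat.gcd_pos_of_pos_left b ha)
  have h_series : (fun r => ∫ θ in (0 : ℝ)..1,
        logNormOneSub r (2 * π * ↑(a' * g) * θ) * logNormOneSub r (2 * π * ↑(b' * g) * θ))
      =ᶠ[𝓝[<] 1] fun r => ∑' k : ℕ, r ^ ((a' + b') * k) / (2 * a' * b' * k ^ 2) := by
    filter_upwards [Ioo_mem_nhdsLT (show (-1 : ℝ) < 1 by norm_num)] with r hr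
    have h := hasSum_integral_logNormOneSub_mul ha (b' * g) (abs_lt.2 hr)
    rw [pairCoeff_mul_right hg, hasSum_pairCoeff_iff hab' (Nat.pos_of_mul_pos_right hb)] at h
    exact h.tsum_eq.symm
  have h_value := tendsto_nhds_unique
    ((tendsto_integral_logNormOneSub_mul (mul_ne_zero two_pi_pos.ne' (Nat.cast_ne_zero.2 ha.ne'))
      (mul_ne_zero two_pi_pos.ne' (Nat.cast_ne_zero.2 hb.ne')) 0 1).congr' h_series)
    (tendsto_tsum_pow_div_mul_sq (a' + b') (2 * a' * b'))
  rw [h_value, Nat.gcd_mul_right, hab'.gcd_eq_one]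
  push_cast
  field_simp
  ring
end

section
/- The multiple Mahler measure m(x+1, x−1) := ∫_0^1 log|e^{2πiθ}+1| · log|e^{2πiθ}−1| dθ equals −π²/24. -/
open Real MeasureTheory Filter Topology intervalIntegral

/-!
For `|c| < 1`, `log |1 - c e(θ)| = -∑ cⁿ cos (2πnθ) / n`, so orthogonality of the cosines gives
`∫₀¹ log |1 - a e(θ)| log |1 - b e(θ)| dθ = Li₂(ab) / 2` for `|a|, |b| < 1`. Take `a = -r`, `b = r`
and let `r → 1⁻`: on the left by dominated convergence, both factors being bounded by
`log 2 - log |sin πθ|` (shifted by `1/2` for the first one), which is square integrable; on the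
right by continuity of `Li₂` on `[-1, 1]`. The value is `Li₂(-1) / 2 = -π² / 24`.
-/

namespace MultipleMahler

noncomputable def e (θ : ℝ) : ℂ := Complex.exp (2 * π * Complex.I * θ)

noncomputable def logFactor (c θ : ℝ) : ℝ := Real.log ‖1 - c * e θ‖

/-- The `n = 0` term is `x ^ 0 / 0 = 0`, so this is `Li₂ x`. -/
noncomputable def dilog (x : ℝ) : ℝ := ∑' n : ℕ, x ^ n / (n : ℝ) ^ 2

lemma e_eq_exp_mul_I (θ : ℝ) : e θ = Complex.exp ((2 * π * θ : ℝ) * Complex.I) := by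
  unfold e; push_cast; ring_nf

lemma norm_e (θ : ℝ) : ‖e θ‖ = 1 := by
  rw [e_eq_exp_mul_I, Complex.norm_exp_ofReal_mul_I]

lemma e_pow (θ : ℝ) (n : ℕ) : e θ ^ n = e (n * θ) := by
  rw [e, e, ← Complex.exp_nat_mul]; push_cast; ring_nf

lemma e_add_half (θ : ℝ) : e (θ + 1 / 2) = -e θ := by
  rw [e, e, show 2 * π * Complex.I * ((θ + 1 / 2 : ℝ) : ℂ) = 2 * π * Complex.I * θ + π * Complex.I
    by push_cast; ring, Complex.exp_add, Complex.exp_pi_mul_I, mul_neg_one]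

lemma logFactor_neg (c θ : ℝ) : logFactor (-c) θ = logFactor c (θ + 1 / 2) := by
  simp only [logFactor, e_add_half, Complex.ofReal_neg, neg_mul, mul_neg]

lemma norm_one_sub_mul_e_sq (r θ : ℝ) :
    ‖1 - r * e θ‖ ^ 2 = (1 - r) ^ 2 + 4 * r * sin (π * θ) ^ 2 := by
  have hcos : cos (2 * π * θ) = 1 - 2 * sin (π * θ) ^ 2 := by
    rw [show 2 * π * θ = 2 * (π * θ) by ring, cos_two_mul, cos_sq']; ring
  rw [← Complex.normSq_eq_norm_sq, Complex.normSq_apply, e_eq_exp_mul_I]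
  simp only [Complex.sub_re, Complex.sub_im, Complex.mul_re, Complex.mul_im, Complex.ofReal_re,
    Complex.ofReal_im, Complex.exp_ofReal_mul_I_re, Complex.exp_ofReal_mul_I_im, Complex.one_re,
    Complex.one_im, zero_mul, add_zero, sub_zero, zero_sub]
  linear_combination r ^ 2 * sin_sq_add_cos_sq (2 * π * θ) - 2 * r * hcos

lemma abs_sin_pi_mul_le_norm_one_sub_mul_e {r : ℝ} (hr : 1 / 4 ≤ r) (θ : ℝ) :
    |sin (π * θ)| ≤ ‖1 - r * e θ‖ := by
  rw [← sq_le_sq₀ (abs_nonneg _) (norm_nonneg _), sq_abs, norm_one_sub_mul_e_sq]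
  nlinarith [sq_nonneg (1 - r), sq_nonneg (sin (π * θ))]

lemma norm_one_sub_mul_e_le {c : ℝ} (hc : |c| ≤ 1) (θ : ℝ) : ‖1 - c * e θ‖ ≤ 2 := by
  calc ‖1 - c * e θ‖ ≤ ‖(1 : ℂ)‖ + ‖(c : ℂ) * e θ‖ := norm_sub_le _ _
    _ ≤ 2 := by rw [norm_mul, norm_e, Complex.norm_real, Real.norm_eq_abs, norm_one]; linarith

lemma abs_log_le_log_two_sub_log {s x : ℝ} (hs : 0 < s) (hs1 : s ≤ 1) (hsx : s ≤ x)
    (hx : x ≤ 2) : |log x| ≤ log 2 - log s := by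
  have hlog2 : 0 ≤ log 2 := log_nonneg one_le_two
  have hlogs : log s ≤ 0 := log_nonpos hs.le hs1
  rw [abs_le]
  constructor
  · linarith [log_le_log hs hsx]
  · linarith [log_le_log (hs.trans_le hsx) hx]

lemma measurable_logFactor (c : ℝ) : Measurable (logFactor c) := by
  unfold logFactor e; fun_prop

/-- The `n = 0` term is `c ^ 0 / 0 * 1 = 0`. -/
lemma hasSum_logFactor {c : ℝ} (hc : |c| < 1) (θ : ℝ) :
    HasSum (fun n : ℕ => -(c ^ n / n * cos (2 * π * n * θ))) (logFactor c θ) := by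
  have hz : ‖(c : ℂ) * e θ‖ < 1 := by rwa [norm_mul, Complex.norm_real, norm_e, mul_one]
  have h := (Complex.hasSum_re (Complex.hasSum_taylorSeries_neg_log hz)).neg
  rw [Complex.neg_re, Complex.log_re, neg_neg] at h
  have hterm (n : ℕ) : ((c * e θ) ^ n / n).re = c ^ n / n * cos (2 * π * n * θ) := by
    rw [mul_pow, e_pow, e_eq_exp_mul_I, ← Complex.ofReal_pow, ← Complex.ofReal_natCast,
      mul_div_right_comm, ← Complex.ofReal_div, Complex.re_ofReal_mul,
      Complex.exp_ofReal_mul_I_re]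
    ring_nf
  simpa only [hterm, logFactor] using h

lemma abs_pow_div_mul_cos_le (c x : ℝ) (n : ℕ) : |c ^ n / n * cos x| ≤ |c| ^ n := by
  rw [abs_mul, abs_div, abs_pow, Nat.abs_cast]
  calc |c| ^ n / n * |cos x| ≤ |c| ^ n / n :=
        mul_le_of_le_one_right (by positivity) (abs_cos_le_one x)
    _ ≤ |c| ^ n := by
      rcases n.eq_zero_or_pos with rfl | hn
      · simp
      · exact div_le_self (by positivity) (by exact_mod_cast hn)

lemma abs_logFactor_le_of_abs_lt_one {c : ℝ} (hc : |c| < 1) (θ : ℝ) :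
    |logFactor c θ| ≤ log 2 - log (1 - |c|) := by
  refine abs_log_le_log_two_sub_log (by linarith) (by linarith [abs_nonneg c]) ?_
    (norm_one_sub_mul_e_le hc.le θ)
  have := norm_sub_norm_le (1 : ℂ) (c * e θ)
  rwa [norm_one, norm_mul, Complex.norm_real, norm_e, mul_one, Real.norm_eq_abs] at this

lemma integral_cos_two_pi_int_mul {m : ℤ} (hm : m ≠ 0) :
    ∫ θ in (0 : ℝ)..1, cos (2 * π * m * θ) = 0 := by
  have hc : 2 * π * m ≠ 0 := by simp [pi_ne_zero, hm]
  rw [integral_comp_mul_left (fun x => cos x) hc, integral_cos, mul_one, mul_zero, sin_zero,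
    sub_zero, show 2 * π * (m : ℝ) = (2 * m : ℤ) * π by push_cast; ring, sin_int_mul_pi,
    smul_zero]

lemma integral_cos_mul_cos (n : ℕ) {k : ℕ} (hk : k ≠ 0) :
    ∫ θ in (0 : ℝ)..1, cos (2 * π * n * θ) * cos (2 * π * k * θ) = if n = k then 1 / 2 else 0 := by
  have hprod (θ : ℝ) : cos (2 * π * n * θ) * cos (2 * π * k * θ) =
      (cos (2 * π * ((n + k : ℤ) : ℝ) * θ) + cos (2 * π * ((n - k : ℤ) : ℝ) * θ)) / 2 := by
    push_cast
    rw [show 2 * π * (n + k) * θ = 2 * π * n * θ + 2 * π * k * θ by ring,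
      show 2 * π * (n - k) * θ = 2 * π * n * θ - 2 * π * k * θ by ring, cos_add, cos_sub]
    ring
  simp_rw [hprod]
  rw [intervalIntegral.integral_div, intervalIntegral.integral_add
    (Continuous.intervalIntegrable (by fun_prop) _ _)
    (Continuous.intervalIntegrable (by fun_prop) _ _),
    integral_cos_two_pi_int_mul (by omega)]
  split_ifs with h
  · simp [h]
  · rw [integral_cos_two_pi_int_mul (by omega)]; norm_num

lemma hasSum_intervalIntegral_of_abs_le {F : ℕ → ℝ → ℝ} {f : ℝ → ℝ} {u : ℕ → ℝ} {a b : ℝ}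
    (hf : ∀ t, HasSum (fun n => F n t) (f t)) (hu : Summable u) (hFu : ∀ n t, |F n t| ≤ u n)
    (hF : ∀ n, AEStronglyMeasurable (F n) (volume.restrict (Set.uIoc a b))) :
    HasSum (fun n => ∫ t in a..b, F n t) (∫ t in a..b, f t) :=
  hasSum_integral_of_dominated_convergence (fun n _ => u n) hF
    (fun n => .of_forall fun t _ => hFu n t) (.of_forall fun _ _ => hu) intervalIntegrable_const
    (.of_forall fun t _ => hf t)

lemma integral_logFactor_mul_cos {c : ℝ} (hc : |c| < 1) {k : ℕ} (hk : k ≠ 0) :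
    ∫ θ in (0 : ℝ)..1, logFactor c θ * cos (2 * π * k * θ) = -c ^ k / (2 * k) := by
  have hterm (n : ℕ) : ∫ θ in (0 : ℝ)..1, -(c ^ n / n * cos (2 * π * n * θ)) * cos (2 * π * k * θ)
      = if n = k then -c ^ k / (2 * k) else 0 := by
    simp_rw [neg_mul, mul_assoc (c ^ n / (n : ℝ)), intervalIntegral.integral_neg,
      intervalIntegral.integral_const_mul, integral_cos_mul_cos n hk]
    split_ifs with h
    · subst h; field_simp
    · simp
  have hs := hasSum_intervalIntegral_of_abs_le (a := 0) (b := 1)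
    (fun θ => (hasSum_logFactor hc θ).mul_right (cos (2 * π * k * θ)))
    (summable_geometric_of_lt_one (abs_nonneg c) hc)
    (fun n θ => by
      rw [abs_mul]
      exact mul_le_of_le_one_right (abs_nonneg _) (abs_cos_le_one _) |>.trans
        (by simpa only [abs_neg] using abs_pow_div_mul_cos_le c _ n))
    (fun n => (Continuous.aestronglyMeasurable (by fun_prop)))
  simp only [hterm] at hs
  exact hs.unique (hasSum_ite_eq k _)

lemma integral_logFactor_mul_logFactor {a b : ℝ} (ha : |a| < 1) (hb : |b| < 1) :
    ∫ θ in (0 : ℝ)..1, logFactor a θ * logFactor b θ = dilog (a * b) / 2 := by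
  have hterm (n : ℕ) : ∫ θ in (0 : ℝ)..1, -(a ^ n / n * cos (2 * π * n * θ)) * logFactor b θ
      = (a * b) ^ n / (n : ℝ) ^ 2 / 2 := by
    rcases n.eq_zero_or_pos with rfl | hn
    · simp
    simp_rw [neg_mul, mul_assoc (a ^ n / (n : ℝ)), mul_comm (cos _) (logFactor b _),
      intervalIntegral.integral_neg, intervalIntegral.integral_const_mul,
      integral_logFactor_mul_cos hb hn.ne']
    field_simp
    ring
  have hs := hasSum_intervalIntegral_of_abs_le (a := 0) (b := 1)
    (fun θ => (hasSum_logFactor ha θ).mul_right (logFactor b θ))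
    ((summable_geometric_of_lt_one (abs_nonneg a) ha).mul_right (log 2 - log (1 - |b|)))
    (fun n θ => by
      rw [abs_mul, abs_neg]
      exact mul_le_mul (abs_pow_div_mul_cos_le a _ n) (abs_logFactor_le_of_abs_lt_one hb θ)
        (abs_nonneg _) (by positivity))
    (fun n => ((Continuous.measurable (by fun_prop)).mul
      (measurable_logFactor b)).aestronglyMeasurable)
  simp only [hterm] at hs
  rw [hs.tsum_eq.symm, dilog, tsum_div_const]

noncomputable def logSinMajorant (θ : ℝ) : ℝ := log 2 - log |sin (π * θ)|

lemma abs_logFactor_le_logSinMajorant {r : ℝ} (hr : 1 / 4 ≤ r) (hr1 : r ≤ 1) {θ : ℝ}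
    (hθ : sin (π * θ) ≠ 0) : |logFactor r θ| ≤ logSinMajorant θ :=
  abs_log_le_log_two_sub_log (abs_pos.2 hθ) (abs_sin_le_one _)
    (abs_sin_pi_mul_le_norm_one_sub_mul_e hr θ)
    (norm_one_sub_mul_e_le (abs_le.2 ⟨by linarith, hr1⟩) θ)

lemma sq_log_le_rpow {x : ℝ} (hx : 0 < x) (hx1 : x ≤ 1) :
    log x ^ 2 ≤ 16 * x ^ (-(1 / 2) : ℝ) := by
  have h := (abs_log_mul_self_rpow_lt x (1 / 4) hx hx1 (by norm_num)).le
  have hsq : (x ^ (1 / 4 : ℝ)) ^ 2 * x ^ (-(1 / 2) : ℝ) = 1 := by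
    rw [← rpow_natCast, ← rpow_mul hx.le, ← rpow_add hx]; norm_num
  calc log x ^ 2 = (log x * x ^ (1 / 4 : ℝ)) ^ 2 * x ^ (-(1 / 2) : ℝ) := by
        rw [mul_pow, mul_assoc, hsq, mul_one]
    _ ≤ 16 * x ^ (-(1 / 2) : ℝ) := by
        gcongr
        nlinarith [sq_abs (log x * x ^ (1 / 4 : ℝ)), abs_nonneg (log x * x ^ (1 / 4 : ℝ))]

lemma logSinMajorant_sq_le {θ : ℝ} (h0 : 0 < θ) (h1 : θ ≤ 1 / 2) :
    logSinMajorant θ ^ 2 ≤ 16 * θ ^ (-(1 / 2) : ℝ) := by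
  have hsin : 2 * θ ≤ sin (π * θ) := by
    have := mul_le_sin (by positivity) (by nlinarith [pi_pos] : π * θ ≤ π / 2)
    rwa [← mul_assoc, div_mul_cancel₀ _ pi_ne_zero] at this
  have habs : |sin (π * θ)| = sin (π * θ) := abs_of_pos (by linarith)
  have hnonneg : 0 ≤ logSinMajorant θ :=
    sub_nonneg.2 (log_nonpos (abs_nonneg _) (abs_sin_le_one _) |>.trans (log_nonneg one_le_two))
  have hle : logSinMajorant θ ≤ -log θ := by
    have := log_le_log (by positivity) hsin
    rw [log_mul two_ne_zero h0.ne'] at this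
    rw [logSinMajorant, habs]; linarith
  calc logSinMajorant θ ^ 2 ≤ (-log θ) ^ 2 := pow_le_pow_left₀ hnonneg hle 2
    _ = log θ ^ 2 := neg_sq _
    _ ≤ 16 * θ ^ (-(1 / 2) : ℝ) := sq_log_le_rpow h0 (by linarith)

lemma logSinMajorant_add_one (θ : ℝ) : logSinMajorant (θ + 1) = logSinMajorant θ := by
  rw [logSinMajorant, mul_add, mul_one, sin_add_pi, abs_neg, logSinMajorant]

lemma logSinMajorant_one_sub (θ : ℝ) : logSinMajorant (1 - θ) = logSinMajorant θ := by
  rw [logSinMajorant, mul_sub, mul_one, sin_pi_sub, logSinMajorant]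

lemma intervalIntegrable_logSinMajorant_sq (a b : ℝ) :
    IntervalIntegrable (fun θ => logSinMajorant θ ^ 2) volume a b := by
  have hmeas : AEStronglyMeasurable (fun θ => logSinMajorant θ ^ 2) :=
    (by unfold logSinMajorant; fun_prop : Measurable _).aestronglyMeasurable
  have hleft : IntervalIntegrable (fun θ => logSinMajorant θ ^ 2) volume 0 (1 / 2) := by
    refine ((intervalIntegrable_rpow' (by norm_num : (-1 : ℝ) < -(1 / 2))).const_mul 16).mono_fun
      hmeas.restrict ?_
    rw [Set.uIoc_of_le (by norm_num)]
    filter_upwards [ae_restrict_mem measurableSet_Ioc] with θ ⟨h0, h1⟩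
    rw [Real.norm_of_nonneg (sq_nonneg _), Real.norm_of_nonneg (by positivity)]
    exact logSinMajorant_sq_le h0 h1
  have hright : IntervalIntegrable (fun θ => logSinMajorant θ ^ 2) volume (1 / 2) 1 := by
    have := hleft.comp_sub_left 1
    simp only [logSinMajorant_one_sub] at this
    norm_num at this
    exact this.symm
  exact Function.Periodic.intervalIntegrable₀ (fun θ => by simp only [logSinMajorant_add_one])
    one_ne_zero (hleft.trans hright) a b

lemma ae_sin_pi_mul_add_ne_zero (t : ℝ) : ∀ᵐ θ : ℝ, sin (π * (θ + t)) ≠ 0 := by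
  have hcount : {θ : ℝ | sin (π * (θ + t)) = 0}.Countable := by
    refine (Set.countable_range fun n : ℤ => (n : ℝ) - t).mono fun θ hθ => ?_
    obtain ⟨n, hn⟩ := sin_eq_zero_iff.mp hθ
    exact ⟨n, by nlinarith [pi_pos]⟩
  exact measure_eq_zero_iff_ae_notMem.mp (hcount.measure_zero volume)

lemma continuousAt_logFactor_one {θ : ℝ} (hθ : sin (π * θ) ≠ 0) :
    ContinuousAt (fun r => logFactor r θ) 1 := by
  have hne : ‖1 - ((1 : ℝ) : ℂ) * e θ‖ ≠ 0 :=
    ((abs_pos.2 hθ).trans_le (abs_sin_pi_mul_le_norm_one_sub_mul_e (by norm_num) θ)).ne'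
  exact ContinuousAt.log (by fun_prop) hne

lemma tendsto_integral_logFactor_neg_mul_logFactor :
    Tendsto (fun r => ∫ θ in (0 : ℝ)..1, logFactor (-r) θ * logFactor r θ) (𝓝[<] 1)
      (𝓝 (∫ θ in (0 : ℝ)..1, logFactor (-1) θ * logFactor 1 θ)) := by
  simp_rw [logFactor_neg]
  have hshift : IntervalIntegrable (fun θ => logSinMajorant (θ + 1 / 2) ^ 2) volume 0 1 := by
    have := (intervalIntegrable_logSinMajorant_sq (1 / 2) (3 / 2)).comp_add_right (1 / 2)
    norm_num at this
    exact this
  refine tendsto_integral_filter_of_dominated_convergence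
    (fun θ => (logSinMajorant (θ + 1 / 2) ^ 2 + logSinMajorant θ ^ 2) / 2)
    (.of_forall fun r => (((measurable_logFactor r).comp (measurable_add_const _)).mul
      (measurable_logFactor r)).aestronglyMeasurable) ?_
    ((hshift.add (intervalIntegrable_logSinMajorant_sq 0 1)).div_const 2) ?_
  · filter_upwards [Ioo_mem_nhdsLT (by norm_num : (1 / 4 : ℝ) < 1)] with r ⟨hr, hr1⟩
    filter_upwards [ae_sin_pi_mul_add_ne_zero (1 / 2), ae_sin_pi_mul_add_ne_zero 0]
      with θ hθ' hθ _
    rw [add_zero] at hθ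
    have h1 := abs_logFactor_le_logSinMajorant hr.le hr1.le hθ'
    have h2 := abs_logFactor_le_logSinMajorant hr.le hr1.le hθ
    rw [Real.norm_eq_abs, abs_mul]
    nlinarith [mul_le_mul h1 h2 (abs_nonneg _) ((abs_nonneg _).trans h1),
      sq_nonneg (logSinMajorant (θ + 1 / 2) - logSinMajorant θ)]
  · filter_upwards [ae_sin_pi_mul_add_ne_zero (1 / 2), ae_sin_pi_mul_add_ne_zero 0]
      with θ hθ' hθ _
    rw [add_zero] at hθ
    exact ((continuousAt_logFactor_one hθ').mul (continuousAt_logFactor_one hθ)).tendsto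
      |>.mono_left nhdsWithin_le_nhds

lemma continuousOn_dilog : ContinuousOn dilog (Set.Icc (-1) 1) := by
  refine continuousOn_tsum (fun n => by fun_prop)
    (Real.summable_one_div_nat_pow.2 one_lt_two) fun n x hx => ?_
  simp only [norm_div, norm_pow, Real.norm_eq_abs, Nat.abs_cast]
  exact div_le_div_of_nonneg_right (pow_le_one₀ (abs_nonneg x) (abs_le.2 hx)) (by positivity)

lemma dilog_neg_one : dilog (-1) = -π ^ 2 / 12 := by
  have h := hasSum_one_div_nat_pow_mul_cos one_ne_zero (x := 1 / 2) ⟨by norm_num, by norm_num⟩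
  change HasSum _ (_ * bernoulliFun (2 * 1) (1 / 2)) at h
  rw [bernoulliFun_two] at h
  refine (h.congr_fun fun n => ?_).tsum_eq.trans (by norm_num; ring)
  rw [show 2 * π * n * (1 / 2) = n * π by ring, cos_nat_mul_pi]
  ring

end MultipleMahler

open MultipleMahler

open Real in
theorem mahler_xp1_xm1 :
    ∫ θ in (0:ℝ)..1,
        Real.log ‖Complex.exp (2 * π * Complex.I * θ) + 1‖ *
        Real.log ‖Complex.exp (2 * π * Complex.I * θ) - 1‖ = -π^2 / 24 := by
  have hintegrand (θ : ℝ) : log ‖Complex.exp (2 * π * Complex.I * θ) + 1‖ *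
      log ‖Complex.exp (2 * π * Complex.I * θ) - 1‖ = logFactor (-1) θ * logFactor 1 θ := by
    have hplus : 1 - ((-1 : ℝ) : ℂ) * e θ = Complex.exp (2 * π * Complex.I * θ) + 1 := by
      push_cast [e]; ring
    have hminus : 1 - ((1 : ℝ) : ℂ) * e θ = -(Complex.exp (2 * π * Complex.I * θ) - 1) := by
      push_cast [e]; ring
    rw [logFactor, logFactor, hplus, hminus, norm_neg]
  have hseries : ∀ᶠ r in 𝓝[<] 1,
      dilog (-r * r) / 2 = ∫ θ in (0 : ℝ)..1, logFactor (-r) θ * logFactor r θ := by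
    filter_upwards [Ioo_mem_nhdsLT (by norm_num : (-1 : ℝ) < 1)] with r hr
    exact (integral_logFactor_mul_logFactor (by rwa [abs_neg, abs_lt]) (abs_lt.2 hr)).symm
  have hdilog : Tendsto (fun r : ℝ => dilog (-r * r) / 2) (𝓝[<] 1) (𝓝 (dilog (-1) / 2)) := by
    have hcont : ContinuousOn (fun r : ℝ => dilog (-r * r)) (Set.Icc (-1) 1) :=
      continuousOn_dilog.comp (by fun_prop) fun r hr =>
        ⟨by nlinarith [hr.1, hr.2], by nlinarith [sq_nonneg r]⟩
    simpa using ((hcont (1 : ℝ) (by norm_num)).mono_of_mem_nhdsWithin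
      (Icc_mem_nhdsLT (by norm_num))).tendsto.div_const 2
  simp_rw [hintegrand]
  rw [tendsto_nhds_unique tendsto_integral_logFactor_neg_mul_logFactor (hdilog.congr' hseries),
    dilog_neg_one]
  ring
end

section
/- Let τ ∈ [0,1) and g(y) = Σ_{n=1}^∞ yⁿ cos(2πnτ)/n². Then the minimum of g on the interval [0,1] is attained at y = 0 or at y = 1. -/
/-!
With `θ = 2πτ`, `g(y) = Re Li₂(y e^{iθ})`. Differentiating termwise,
`y g'(y) = Re ∑ (y e^{iθ})ⁿ / n = -½ log (1 - 2y cos θ + y²)`, which is `≥ 0` for `y ≤ 2 cos θ`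
and `≤ 0` beyond. So `g` increases and then decreases on `[0, 1]`, and its minimum there is
attained at an endpoint.
-/

open Real Set

theorem min_le_of_hasDerivAt_sign_change {f f' : ℝ → ℝ} {a b c y : ℝ}
    (hf : ContinuousOn f (Icc a b)) (hf' : ∀ x ∈ Ioo a b, HasDerivAt f (f' x) x)
    (hleft : ∀ x ∈ Ioo a b, x ≤ c → 0 ≤ f' x) (hright : ∀ x ∈ Ioo a b, c ≤ x → f' x ≤ 0)
    (hy : y ∈ Icc a b) : min (f a) (f b) ≤ f y := by
  rcases le_total y c with hyc | hcy
  · have hmono : MonotoneOn f (Icc a y) := by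
      refine monotoneOn_of_hasDerivWithinAt_nonneg (convex_Icc a y)
        (hf.mono (Icc_subset_Icc_right hy.2)) (fun x hx => ?_) (fun x hx => ?_) (f' := f')
      all_goals rw [interior_Icc] at hx
      · exact (hf' x ⟨hx.1, hx.2.trans_le hy.2⟩).hasDerivWithinAt
      · exact hleft x ⟨hx.1, hx.2.trans_le hy.2⟩ (hx.2.le.trans hyc)
    exact (min_le_left _ _).trans (hmono (left_mem_Icc.2 hy.1) (right_mem_Icc.2 hy.1) hy.1)
  · have hanti : AntitoneOn f (Icc y b) := by
      refine antitoneOn_of_hasDerivWithinAt_nonpos (convex_Icc y b)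
        (hf.mono (Icc_subset_Icc_left hy.1)) (fun x hx => ?_) (fun x hx => ?_) (f' := f')
      all_goals rw [interior_Icc] at hx
      · exact (hf' x ⟨hy.1.trans_lt hx.1, hx.2⟩).hasDerivWithinAt
      · exact hright x ⟨hy.1.trans_lt hx.1, hx.2⟩ (hcy.trans hx.1.le)
    exact (min_le_right _ _).trans (hanti (left_mem_Icc.2 hy.2) (right_mem_Icc.2 hy.2) hy.2)

noncomputable def cosDilog (θ y : ℝ) : ℝ :=
  ∑' n : ℕ, y ^ (n + 1) * cos ((n + 1) * θ) / ((n : ℝ) + 1) ^ 2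

theorem summable_one_div_succ_sq : Summable fun n : ℕ => 1 / ((n : ℝ) + 1) ^ 2 := by
  exact_mod_cast (summable_nat_add_iff 1).mpr (Real.summable_one_div_nat_pow.mpr one_lt_two)

theorem continuousOn_cosDilog (θ : ℝ) : ContinuousOn (cosDilog θ) (Icc (-1) 1) := by
  refine continuousOn_tsum (fun n => by fun_prop) summable_one_div_succ_sq fun n x hx => ?_
  have hx : |x| ≤ 1 := abs_le.2 hx
  simp only [norm_div, norm_mul, norm_pow, Real.norm_eq_abs]
  rw [abs_of_pos (by positivity : (0 : ℝ) < (n : ℝ) + 1)]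
  gcongr
  exact mul_le_one₀ (pow_le_one₀ (abs_nonneg x) hx) (abs_nonneg _) (abs_cos_le_one _)

theorem hasDerivAt_pow_succ_mul_div_succ_sq (n : ℕ) (c y : ℝ) :
    HasDerivAt (fun y => y ^ (n + 1) * c / ((n : ℝ) + 1) ^ 2) (y ^ n * c / ((n : ℝ) + 1)) y := by
  refine (((hasDerivAt_pow (n + 1) y).mul_const c).div_const _).congr_deriv ?_
  push_cast
  field_simp

theorem hasDerivAt_cosDilog (θ : ℝ) {x : ℝ} (hx : |x| < 1) :
    HasDerivAt (cosDilog θ) (∑' n : ℕ, x ^ n * cos ((n + 1) * θ) / ((n : ℝ) + 1)) x := by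
  set r := (|x| + 1) / 2 with hr
  have hr1 : r < 1 := by linarith
  have hxr : |x| < r := by linarith
  refine hasDerivAt_tsum_of_isPreconnected (summable_geometric_of_lt_one (by positivity) hr1)
    isOpen_Ioo isPreconnected_Ioo (fun n y _ => hasDerivAt_pow_succ_mul_div_succ_sq n _ y)
    (fun n y hy => ?_) (y₀ := 0) (by simp; linarith [abs_nonneg x]) (by simp) (abs_lt.1 hxr)
  have hy : |y| ≤ r := (abs_lt.2 hy).le
  simp only [norm_div, norm_mul, norm_pow, Real.norm_eq_abs]
  rw [abs_of_pos (by positivity : (0 : ℝ) < (n : ℝ) + 1)]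
  calc |y| ^ n * |cos ((n + 1) * θ)| / ((n : ℝ) + 1) ≤ |y| ^ n * |cos ((n + 1) * θ)| :=
        div_le_self (by positivity) (by linarith [n.cast_nonneg (α := ℝ)])
    _ ≤ r ^ n := (mul_le_of_le_one_right (by positivity) (abs_cos_le_one _)).trans (by gcongr)

theorem hasSum_pow_succ_mul_cos_div_succ (θ : ℝ) {x : ℝ} (hx : |x| < 1) :
    HasSum (fun n : ℕ => x ^ (n + 1) * cos ((n + 1) * θ) / ((n : ℝ) + 1))
      (-log (1 - 2 * x * cos θ + x ^ 2) / 2) := by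
  -- real part of `∑ zⁿ⁺¹/(n+1) = -log (1 - z)` at `z = x e^{iθ}`
  set z : ℂ := x * Complex.exp (θ * Complex.I)
  have hz : ‖z‖ < 1 := by simpa [z] using hx
  have hterm (n : ℕ) : z ^ (n + 1) / (n + 1) =
      ((x ^ (n + 1) / (n + 1) : ℝ) : ℂ) * Complex.exp (((n + 1) * θ : ℝ) * Complex.I) := by
    rw [mul_pow, ← Complex.exp_nat_mul]
    push_cast
    ring_nf
  have hnorm : ‖1 - z‖ ^ 2 = 1 - 2 * x * cos θ + x ^ 2 := by
    rw [Complex.sq_norm, Complex.normSq_apply]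
    simp only [z, Complex.sub_re, Complex.sub_im, Complex.one_re, Complex.one_im,
      Complex.re_ofReal_mul, Complex.im_ofReal_mul, Complex.exp_ofReal_mul_I_re,
      Complex.exp_ofReal_mul_I_im]
    nlinarith [sin_sq_add_cos_sq θ]
  have := Complex.hasSum_re (Complex.hasSum_taylorSeries_neg_log' hz)
  simp only [hterm, Complex.re_ofReal_mul, Complex.exp_ofReal_mul_I_re, Complex.neg_re,
    Complex.log_re] at this
  convert this using 1
  · ext n; ring
  · rw [← hnorm, log_pow]; push_cast; ring

theorem hasDerivAt_cosDilog_of_ne_zero (θ : ℝ) {x : ℝ} (hx0 : x ≠ 0) (hx : |x| < 1) :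
    HasDerivAt (cosDilog θ) (-log (1 - 2 * x * cos θ + x ^ 2) / (2 * x)) x := by
  refine (hasDerivAt_cosDilog θ hx).congr_deriv ?_
  rw [← div_div, ← ((hasSum_pow_succ_mul_cos_div_succ θ hx).div_const x).tsum_eq]
  congr 1 with n
  field_simp
  ring

theorem min_cosDilog_zero_one_le (θ : ℝ) {y : ℝ} (hy : y ∈ Icc 0 1) :
    min (cosDilog θ 0) (cosDilog θ 1) ≤ cosDilog θ y := by
  -- `1 - 2 x cos θ + x² ≤ 1` exactly when `x ≤ 2 cos θ`, so the derivative changes sign once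
  refine min_le_of_hasDerivAt_sign_change (c := 2 * cos θ)
    ((continuousOn_cosDilog θ).mono (Icc_subset_Icc_left (by norm_num)))
    (fun x hx => hasDerivAt_cosDilog_of_ne_zero θ hx.1.ne' (abs_lt.2 ⟨by linarith [hx.1], hx.2⟩))
    (fun x ⟨hx0, _⟩ hxc => ?_) (fun x ⟨hx0, _⟩ hxc => ?_) hy
  · have hlog : log (1 - 2 * x * cos θ + x ^ 2) ≤ 0 :=
      log_nonpos (by nlinarith [cos_le_one θ]) (by nlinarith)
    exact div_nonneg (by linarith) (by linarith)
  · have hlog : 0 ≤ log (1 - 2 * x * cos θ + x ^ 2) := log_nonneg (by nlinarith)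
    exact div_nonpos_of_nonpos_of_nonneg (by linarith) (by linarith)

open Real in
theorem g_min_at_endpoints_general (τ : ℝ) :
    ∀ y ∈ Set.Icc (0:ℝ) 1,
      (∑' n : ℕ, y^(n+1) * Real.cos (2 * π * (n+1) * τ) / ((n:ℝ)+1)^2) ≥
      min (∑' n : ℕ, (0:ℝ)^(n+1) * Real.cos (2 * π * (n+1) * τ) / ((n:ℝ)+1)^2)
          (∑' n : ℕ, (1:ℝ)^(n+1) * Real.cos (2 * π * (n+1) * τ) / ((n:ℝ)+1)^2) := by
  have hg (w : ℝ) : ∑' n : ℕ, w^(n+1) * Real.cos (2 * π * (n+1) * τ) / ((n:ℝ)+1)^2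
      = cosDilog (2 * π * τ) w :=
    tsum_congr fun n => by ring_nf
  intro y hy
  rw [hg, hg, hg]
  exact min_cosDilog_zero_one_le (2 * π * τ) hy

open Real in
theorem g_min_at_endpoints (τ : ℝ) (hτ0 : 0 ≤ τ) (hτ1 : τ < 1) :
    ∀ y ∈ Set.Icc (0:ℝ) 1,
      (∑' n : ℕ, y^(n+1) * Real.cos (2 * π * (n+1) * τ) / ((n:ℝ)+1)^2) ≥
      min (∑' n : ℕ, (0:ℝ)^(n+1) * Real.cos (2 * π * (n+1) * τ) / ((n:ℝ)+1)^2)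
          (∑' n : ℕ, (1:ℝ)^(n+1) * Real.cos (2 * π * (n+1) * τ) / ((n:ℝ)+1)^2) :=
  g_min_at_endpoints_general τ
end
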